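/- arXiv:math/9909014 — 2 statements merged into one kernel-verified Lean document; each statement's English description precedes it below -/
import Mathlib

section
/- For every index 1 ≤ i ≤ n and every t = (t_1, …, t_n) ∈ ℝ^n with t_j − t_k ∉ ℤ for all j ≠ k, the full gauge identity underlying the conjugation of the Hamiltonian holds: f(t) · ∏_{k < i} (1 − [l][l+1] ξ(2(t_i − t_k))) = f(t + e_i) · ∏_{k ≠ i} (q^{t_i − t_k + 1 + l} − q^{−(t_i − t_k + 1 + l)}) / (q^{t_i − t_k + 1} − q^{−(t_i − t_k + 1)}). -/
/-- The symmetric q-integer `[m] = (q^m - q^{-m})/(q - q⁻¹)` (real powers). -/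
noncomputable def qint (q : ℝ) (m : ℤ) : ℝ :=
  (q ^ (m : ℝ) - q ^ (-(m : ℝ))) / (q - q⁻¹)

/-- `ξ(y) = (q - q⁻¹)² q^{y+1} / ((q^y - 1)(q^{y+2} - 1))`. -/
noncomputable def xi (q y : ℝ) : ℝ :=
  (q - q⁻¹) ^ 2 * q ^ (y + 1) / ((q ^ y - 1) * (q ^ (y + 2) - 1))

/-- `g(t) = (∏_{m=1}^{l} (q^{t+m} - q^{-t-m}))⁻¹`. -/
noncomputable def gfun (q : ℝ) (l : ℕ) (t : ℝ) : ℝ :=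
  (∏ m ∈ Finset.Icc 1 l, (q ^ (t + (m : ℝ)) - q ^ (-(t + (m : ℝ)))))⁻¹

/-- `f(t₁, …, tₙ) = ∏_{i<k} g(tᵢ - tₖ)`. -/
noncomputable def ffun (q : ℝ) (l n : ℕ) (t : Fin n → ℝ) : ℝ :=
  ∏ i : Fin n, ∏ k ∈ Finset.univ.filter (fun k => i < k), gfun q l (t i - t k)

lemma rpow_ne_one' {q : ℝ} (hq : 0 < q) (hq1 : q ≠ 1) {s : ℝ} (hs : s ≠ 0) : q ^ s ≠ 1 := by
  intro h
  have h2 := congrArg Real.log h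
  rw [Real.log_rpow hq, Real.log_one] at h2
  rcases mul_eq_zero.1 h2 with h3 | h3
  · exact hs h3
  · exact Real.log_ne_zero_of_pos_of_ne_one hq hq1 h3

lemma hne' {q : ℝ} (hq : 0 < q) (hq1 : q ≠ 1) {s : ℝ} (hs : s ≠ 0) :
    q ^ s - q ^ (-s) ≠ 0 := by
  intro h
  have he : q ^ s = q ^ (-s) := by linarith [sub_eq_zero.1 h]
  have h1 : q ^ (2 * s) = 1 := by
    rw [show 2 * s = s + s by ring, Real.rpow_add hq]
    nth_rewrite 2 [he]
    rw [← Real.rpow_add hq, add_neg_cancel, Real.rpow_zero]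
  exact rpow_ne_one' hq hq1 (by intro h'; exact hs (by linarith)) h1

lemma telescope (H : ℝ → ℝ) (c : ℝ) (l : ℕ) :
    (∏ m ∈ Finset.Icc 1 l, H (c + m)) * H c
      = (∏ m ∈ Finset.Icc 1 l, H (c - 1 + m)) * H (c + l) := by
  induction l with
  | zero => simp
  | succ l ih =>
    rw [Finset.prod_Icc_succ_top (Nat.le_add_left 1 l),
        Finset.prod_Icc_succ_top (Nat.le_add_left 1 l)]
    push_cast
    rw [show c - 1 + (l + 1) = c + l by ring]
    linear_combination H (c + (l + 1)) * ih

lemma shift_ne {c : ℝ} (hc : ∀ z : ℤ, c ≠ z) (z : ℤ) : c + (z : ℝ) ≠ 0 := by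
  intro h
  exact hc (-z) (by push_cast; linarith)

lemma gfun_step {q : ℝ} (hq : 0 < q) (hq1 : q ≠ 1) (l : ℕ) {c : ℝ}
    (hc : ∀ z : ℤ, c ≠ z) :
    gfun q l (c - 1) * (q ^ c - q ^ (-c))
      = gfun q l c * (q ^ (c + (l : ℝ)) - q ^ (-(c + (l : ℝ)))) := by
  unfold gfun
  have h1 : ∀ m ∈ Finset.Icc 1 l, q ^ (c - 1 + (m : ℝ)) - q ^ (-(c - 1 + (m : ℝ))) ≠ 0 := by
    intro m _
    refine hne' hq hq1 ?_
    have := shift_ne hc ((m : ℤ) - 1)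
    intro h; apply this; push_cast; linarith
  have h2 : ∀ m ∈ Finset.Icc 1 l, q ^ (c + (m : ℝ)) - q ^ (-(c + (m : ℝ))) ≠ 0 := by
    intro m _
    exact hne' hq hq1 (by simpa using shift_ne hc (m : ℤ))
  have P1 : (∏ m ∈ Finset.Icc 1 l, (q ^ (c - 1 + (m : ℝ)) - q ^ (-(c - 1 + (m : ℝ))))) ≠ 0 :=
    Finset.prod_ne_zero_iff.mpr h1
  have P2 : (∏ m ∈ Finset.Icc 1 l, (q ^ (c + (m : ℝ)) - q ^ (-(c + (m : ℝ))))) ≠ 0 :=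
    Finset.prod_ne_zero_iff.mpr h2
  have ht := telescope (fun x => q ^ x - q ^ (-x)) c l
  rw [inv_mul_eq_div, inv_mul_eq_div, div_eq_div_iff P1 P2]
  linear_combination ht

lemma abstract_key (a b q : ℝ) (ha : a ≠ 0) (hb : b ≠ 0) (hq0 : q ≠ 0)
    (hqq : q - q⁻¹ ≠ 0) (hA : a - a⁻¹ ≠ 0) (hB : a * q - (a * q)⁻¹ ≠ 0) :
    (1 - (b - b⁻¹) / (q - q⁻¹) * ((b * q - (b * q)⁻¹) / (q - q⁻¹)) *
        ((q - q⁻¹) ^ 2 / ((a - a⁻¹) * (a * q - (a * q)⁻¹)))) *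
      ((a - a⁻¹) * (a * q - (a * q)⁻¹)) =
    (a / b - (a / b)⁻¹) * (a * q * b - (a * q * b)⁻¹) := by
  have hD : (a - a⁻¹) * (a * q - (a * q)⁻¹) ≠ 0 := mul_ne_zero hA hB
  rw [div_mul_div_comm, div_mul_div_comm]
  rw [show (q - q⁻¹) * (q - q⁻¹) * ((a - a⁻¹) * (a * q - (a * q)⁻¹))
      = ((a - a⁻¹) * (a * q - (a * q)⁻¹)) * (q - q⁻¹) ^ 2 by ring]
  rw [show (b - b⁻¹) * (b * q - (b * q)⁻¹) * (q - q⁻¹) ^ 2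
      = ((b - b⁻¹) * (b * q - (b * q)⁻¹)) * (q - q⁻¹) ^ 2 by ring]
  rw [mul_div_mul_right _ _ (pow_ne_zero 2 hqq)]
  rw [sub_mul, one_mul, div_mul_cancel₀ _ hD]
  field_simp
  ring

lemma key_alg {q : ℝ} (hq : 0 < q) (hq1 : q ≠ 1) (l : ℕ) {u : ℝ}
    (hu : u ≠ 0) (hu1 : u + 1 ≠ 0) :
    (1 - qint q l * qint q (l + 1) * xi q (2 * u)) *
      ((q ^ u - q ^ (-u)) * (q ^ (u + 1) - q ^ (-(u + 1)))) =
    (q ^ (u - (l : ℝ)) - q ^ (-(u - (l : ℝ)))) *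
      (q ^ (u + 1 + (l : ℝ)) - q ^ (-(u + 1 + (l : ℝ)))) := by
  have hq0 : q ≠ 0 := ne_of_gt hq
  have hqq : q - q⁻¹ ≠ 0 := by
    intro h
    have h5 : q * q - q * q⁻¹ = 0 := by linear_combination q * h
    rw [mul_inv_cancel₀ hq0] at h5
    rcases lt_or_gt_of_ne hq1 with hlt | hgt
    · nlinarith
    · nlinarith
  have d1 : q ^ u * q ^ u - 1 ≠ 0 := by
    have h := rpow_ne_one' hq hq1 (s := u + u) (by intro h; exact hu (by linarith))
    rw [Real.rpow_add hq u u] at h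
    exact sub_ne_zero.2 h
  have d2 : q ^ u * q * (q ^ u * q) - 1 ≠ 0 := by
    have h := rpow_ne_one' hq hq1 (s := (u + 1) + (u + 1)) (by intro h; exact hu1 (by linarith))
    rw [Real.rpow_add hq (u + 1) (u + 1), Real.rpow_add hq u 1, Real.rpow_one] at h
    exact sub_ne_zero.2 h
  have hA : q ^ u - (q ^ u)⁻¹ ≠ 0 := by
    have h := hne' hq hq1 hu
    rwa [Real.rpow_neg hq.le] at h
  have hB : q ^ u * q - (q ^ u * q)⁻¹ ≠ 0 := by
    have h := hne' hq hq1 hu1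
    rwa [Real.rpow_neg hq.le, Real.rpow_add hq u 1, Real.rpow_one] at h
  have ha : q ^ u ≠ 0 := (Real.rpow_pos_of_pos hq u).ne'
  have hb : q ^ (l : ℝ) ≠ 0 := (Real.rpow_pos_of_pos hq (l : ℝ)).ne'
  unfold qint xi
  push_cast
  rw [show (2 : ℝ) * u + 1 = u + (u + 1) by ring, show (2 : ℝ) * u + 2 = (u + 1) + (u + 1) by ring,
      show (2 : ℝ) * u = u + u by ring]
  rw [Real.rpow_neg hq.le, Real.rpow_neg hq.le, Real.rpow_neg hq.le, Real.rpow_neg hq.le,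
      Real.rpow_neg hq.le, Real.rpow_neg hq.le]
  rw [Real.rpow_add hq u (u + 1), Real.rpow_add hq u u, Real.rpow_add hq (u + 1) (u + 1),
      Real.rpow_add hq (u + 1) (l : ℝ), Real.rpow_sub hq u (l : ℝ),
      Real.rpow_add hq u 1, Real.rpow_add hq (l : ℝ) 1, Real.rpow_one]
  set a := q ^ u with hadef
  set b := q ^ (l : ℝ) with hbdef
  have hxiv : (q - q⁻¹) ^ 2 * (a * (a * q)) / ((a * a - 1) * (a * q * (a * q) - 1))
      = (q - q⁻¹) ^ 2 / ((a - a⁻¹) * (a * q - (a * q)⁻¹)) := by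
    rw [div_eq_div_iff (mul_ne_zero d1 d2) (mul_ne_zero hA hB)]
    field_simp
  rw [hxiv]
  exact abstract_key a b q ha hb hq0 hqq hA hB

lemma right_factor {q : ℝ} (hq : 0 < q) (hq1 : q ≠ 1) (l : ℕ) {u : ℝ}
    (hu : ∀ z : ℤ, u ≠ z) :
    gfun q l u = gfun q l (u + 1) *
      ((q ^ (u + 1 + (l : ℝ)) - q ^ (-(u + 1 + (l : ℝ)))) / (q ^ (u + 1) - q ^ (-(u + 1)))) := by
  have hc : ∀ z : ℤ, u + 1 ≠ z := by
    intro z h; exact hu (z - 1) (by push_cast; linarith)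
  have hstep := gfun_step hq hq1 l hc
  rw [show u + 1 - 1 = u by ring] at hstep
  have hB : q ^ (u + 1) - q ^ (-(u + 1)) ≠ 0 :=
    hne' hq hq1 (by intro h; exact hu (-1) (by push_cast; linarith))
  rw [mul_div_assoc'] at *
  rw [eq_div_iff hB]
  linear_combination hstep

lemma left_factor {q : ℝ} (hq : 0 < q) (hq1 : q ≠ 1) (l : ℕ) {u : ℝ}
    (hu : ∀ z : ℤ, u ≠ z) :
    gfun q l (-u) * (1 - qint q l * qint q (l + 1) * xi q (2 * u)) =
      gfun q l (-u - 1) *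
      ((q ^ (u + 1 + (l : ℝ)) - q ^ (-(u + 1 + (l : ℝ)))) / (q ^ (u + 1) - q ^ (-(u + 1)))) := by
  have hc : ∀ z : ℤ, -u ≠ z := by
    intro z h; exact hu (-z) (by push_cast; linarith)
  have hstep := gfun_step hq hq1 l hc
  have hu0 : u ≠ 0 := by intro h; exact hu 0 (by push_cast; linarith)
  have hu1 : u + 1 ≠ 0 := by intro h; exact hu (-1) (by push_cast; linarith)
  have hUA : q ^ u - q ^ (-u) ≠ 0 := hne' hq hq1 hu0
  have hB : q ^ (u + 1) - q ^ (-(u + 1)) ≠ 0 := hne' hq hq1 hu1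
  have hkey := key_alg hq hq1 l hu0 hu1
  have e1 : q ^ (-(-u)) = q ^ u := by rw [neg_neg]
  have e2 : q ^ (-u + (l : ℝ)) = q ^ (-(u - (l : ℝ))) := by
    rw [show -u + (l : ℝ) = -(u - (l : ℝ)) by ring]
  have e3 : q ^ (-(-u + (l : ℝ))) = q ^ (u - (l : ℝ)) := by
    rw [show -(-u + (l : ℝ)) = u - (l : ℝ) by ring]
  rw [e1, e2, e3] at hstep
  rw [mul_div_assoc', eq_div_iff hB]
  apply mul_left_cancel₀ hUA
  linear_combination (q ^ (u + 1 + (l : ℝ)) - q ^ (-(u + 1 + (l : ℝ)))) * hstep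
    + gfun q l (-u) * hkey

lemma ffun_decomp (q : ℝ) (l n : ℕ) (t : Fin n → ℝ) (i : Fin n) :
    ffun q l n t =
      ((∏ j ∈ Finset.univ.filter (fun j => j ≠ i),
        ∏ k ∈ Finset.univ.filter (fun k => j < k ∧ k ≠ i), gfun q l (t j - t k))
      * (∏ k ∈ Finset.univ.filter (fun k => i < k), gfun q l (t i - t k)))
      * (∏ j ∈ Finset.univ.filter (fun j => j < i), gfun q l (t j - t i)) := by
  unfold ffun
  rw [← Finset.mul_prod_erase _ _ (Finset.mem_univ i)]
  have hsplit : ∀ j : Fin n,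
      (∏ k ∈ Finset.univ.filter (fun k => j < k), gfun q l (t j - t k))
        = (∏ k ∈ Finset.univ.filter (fun k => j < k ∧ k ≠ i), gfun q l (t j - t k))
          * (if j < i then gfun q l (t j - t i) else 1) := by
    intro j
    rw [← Finset.prod_filter_mul_prod_filter_not (Finset.univ.filter (fun k => j < k))
        (fun k => k ≠ i), Finset.filter_filter, Finset.filter_filter]
    congr 1
    have : Finset.filter (fun k => j < k ∧ ¬k ≠ i) Finset.univ
        = if j < i then {i} else ∅ := by
      ext k
      by_cases h : j < i
      · simp only [Finset.mem_filter, Finset.mem_univ, true_and, not_not, if_pos h,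
          Finset.mem_singleton]
        constructor
        · rintro ⟨h1, h2⟩; exact h2
        · rintro rfl; exact ⟨h, rfl⟩
      · simp only [Finset.mem_filter, Finset.mem_univ, true_and, not_not, if_neg h,
          Finset.notMem_empty, iff_false, not_and]
        intro h1 h2
        subst h2
        exact h h1
    rw [this]
    by_cases h : j < i <;> simp [h]
  have h2 : ∏ j ∈ Finset.univ.erase i, ∏ k ∈ Finset.univ.filter (fun k => j < k),
      gfun q l (t j - t k)
      = (∏ j ∈ Finset.univ.filter (fun j => j ≠ i),
          ∏ k ∈ Finset.univ.filter (fun k => j < k ∧ k ≠ i), gfun q l (t j - t k))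
        * (∏ j ∈ Finset.univ.filter (fun j => j < i), gfun q l (t j - t i)) := by
    rw [Finset.prod_congr rfl (fun j _ => hsplit j), Finset.prod_mul_distrib]
    congr 1
    · rw [Finset.filter_ne']
    · rw [Finset.prod_erase _ (by simp)]
      exact (Finset.prod_filter _ _).symm
  rw [h2]
  ring

lemma assemble {F0 P W PA P' W' Dlt Dgt : ℝ} (HP : P = P' * Dgt) (HW : W * PA = W' * Dlt) :
    ((F0 * P) * W) * PA = ((F0 * P') * W') * (Dlt * Dgt) := by
  rw [HP]
  linear_combination F0 * P' * Dgt * HW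

/-- the full gauge identity underlying the conjugation of the Hamiltonian:
`f(t) ∏_{k<i} (1 - [l][l+1] ξ(2(tᵢ-tₖ)))
   = f(t + eᵢ) ∏_{k≠i} (q^{tᵢ-tₖ+1+l} - q^{-(tᵢ-tₖ+1+l)})/(q^{tᵢ-tₖ+1} - q^{-(tᵢ-tₖ+1)})`. -/
theorem full_gauge_identity (q : ℝ) (hq : 0 < q) (hq1 : q ≠ 1)
    (l : ℕ) (hl : 0 < l) (n : ℕ) (hn : 2 ≤ n) (t : Fin n → ℝ)
    (ht : ∀ j k : Fin n, j ≠ k → ∀ z : ℤ, t j - t k ≠ (z : ℝ))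
    (i : Fin n) :
    ffun q l n t *
        ∏ k ∈ Finset.univ.filter (fun k => k < i),
          (1 - qint q l * qint q (l + 1) * xi q (2 * (t i - t k))) =
      ffun q l n (t + Pi.single i 1) *
        ∏ k ∈ Finset.univ.filter (fun k => k ≠ i),
          (q ^ (t i - t k + 1 + l) - q ^ (-(t i - t k + 1 + (l : ℝ)))) /
            (q ^ (t i - t k + 1) - q ^ (-(t i - t k + 1))) := by
  have hne : ∀ k : Fin n, k ≠ i → ∀ z : ℤ, t i - t k ≠ (z : ℝ) :=
    fun k hk => ht i k (Ne.symm hk)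
  set t' := t + Pi.single i 1 with ht'def
  have ht'i : t' i = t i + 1 := by simp [ht'def]
  have ht'k : ∀ k : Fin n, k ≠ i → t' k = t k := by
    intro k hk; simp [ht'def, Pi.single_eq_of_ne hk]
  rw [ffun_decomp q l n t i, ffun_decomp q l n t' i]
  have e1 : (∏ j ∈ Finset.univ.filter (fun j => j ≠ i),
        ∏ k ∈ Finset.univ.filter (fun k => j < k ∧ k ≠ i), gfun q l (t' j - t' k))
      = ∏ j ∈ Finset.univ.filter (fun j => j ≠ i),
        ∏ k ∈ Finset.univ.filter (fun k => j < k ∧ k ≠ i), gfun q l (t j - t k) := by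
    refine Finset.prod_congr rfl fun j hj => Finset.prod_congr rfl fun k hk => ?_
    simp only [Finset.mem_filter] at hj hk
    rw [ht'k j hj.2, ht'k k hk.2.2]
  have e2 : (∏ k ∈ Finset.univ.filter (fun k => i < k), gfun q l (t' i - t' k))
      = ∏ k ∈ Finset.univ.filter (fun k => i < k), gfun q l (t i - t k + 1) := by
    refine Finset.prod_congr rfl fun k hk => ?_
    simp only [Finset.mem_filter] at hk
    rw [ht'i, ht'k k (ne_of_gt hk.2), show t i + 1 - t k = t i - t k + 1 by ring]
  have e3 : (∏ j ∈ Finset.univ.filter (fun j => j < i), gfun q l (t' j - t' i))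
      = ∏ j ∈ Finset.univ.filter (fun j => j < i), gfun q l (t j - t i - 1) := by
    refine Finset.prod_congr rfl fun j hj => ?_
    simp only [Finset.mem_filter] at hj
    rw [ht'i, ht'k j (ne_of_lt hj.2), show t j - (t i + 1) = t j - t i - 1 by ring]
  have e4 : (∏ k ∈ Finset.univ.filter (fun k => k ≠ i),
        (q ^ (t i - t k + 1 + l) - q ^ (-(t i - t k + 1 + (l : ℝ)))) /
          (q ^ (t i - t k + 1) - q ^ (-(t i - t k + 1))))
      = (∏ k ∈ Finset.univ.filter (fun k => k < i),
          (q ^ (t i - t k + 1 + l) - q ^ (-(t i - t k + 1 + (l : ℝ)))) /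
            (q ^ (t i - t k + 1) - q ^ (-(t i - t k + 1))))
        * (∏ k ∈ Finset.univ.filter (fun k => i < k),
          (q ^ (t i - t k + 1 + l) - q ^ (-(t i - t k + 1 + (l : ℝ)))) /
            (q ^ (t i - t k + 1) - q ^ (-(t i - t k + 1)))) := by
    have hset : Finset.univ.filter (fun k : Fin n => k ≠ i)
        = Finset.univ.filter (fun k => k < i) ∪ Finset.univ.filter (fun k => i < k) := by
      ext k
      simp only [Finset.mem_filter, Finset.mem_univ, true_and, Finset.mem_union]
      exact ⟨fun h => lt_or_gt_of_ne h, fun h => h.elim ne_of_lt ne_of_gt⟩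
    have hdisj : Disjoint (Finset.univ.filter (fun k : Fin n => k < i))
        (Finset.univ.filter (fun k => i < k)) := by
      rw [Finset.disjoint_left]
      intro k hk1 hk2
      simp only [Finset.mem_filter, Finset.mem_univ, true_and] at hk1 hk2
      exact lt_asymm hk1 hk2
    rw [hset, Finset.prod_union hdisj]
  rw [e1, e2, e3, e4]
  have HP : (∏ k ∈ Finset.univ.filter (fun k => i < k), gfun q l (t i - t k))
      = (∏ k ∈ Finset.univ.filter (fun k => i < k), gfun q l (t i - t k + 1))
        * (∏ k ∈ Finset.univ.filter (fun k => i < k),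
          (q ^ (t i - t k + 1 + l) - q ^ (-(t i - t k + 1 + (l : ℝ)))) /
            (q ^ (t i - t k + 1) - q ^ (-(t i - t k + 1)))) := by
    rw [← Finset.prod_mul_distrib]
    refine Finset.prod_congr rfl fun k hk => ?_
    simp only [Finset.mem_filter] at hk
    exact right_factor hq hq1 l (hne k (ne_of_gt hk.2))
  have HW : (∏ j ∈ Finset.univ.filter (fun j => j < i), gfun q l (t j - t i))
        * (∏ k ∈ Finset.univ.filter (fun k => k < i),
          (1 - qint q l * qint q (l + 1) * xi q (2 * (t i - t k))))
      = (∏ j ∈ Finset.univ.filter (fun j => j < i), gfun q l (t j - t i - 1))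
        * (∏ k ∈ Finset.univ.filter (fun k => k < i),
          (q ^ (t i - t k + 1 + l) - q ^ (-(t i - t k + 1 + (l : ℝ)))) /
            (q ^ (t i - t k + 1) - q ^ (-(t i - t k + 1)))) := by
    rw [← Finset.prod_mul_distrib, ← Finset.prod_mul_distrib]
    refine Finset.prod_congr rfl fun k hk => ?_
    simp only [Finset.mem_filter] at hk
    have hk' := hne k (ne_of_lt hk.2)
    have hlf := left_factor hq hq1 l hk'
    rw [show t k - t i = -(t i - t k) by ring]
    exact hlf
  exact assemble HP HW
end

section
/- (Lemma 2) The gauge conjugation f H_l f^{−1} of the difference Hamiltonian H_l obtained from the dynamical R-matrix is the Ruijsenaars–Schneider (Macdonald-type) difference operator: for every function ψ : ℝ^n → ℝ and every t = (t_1, …, t_n) ∈ ℝ^n with t_j − t_k ∉ ℤ for all j ≠ k, one has f(t) · Σ_{i=1}^{n} ( ∏_{k < i} (1 − [l][l+1] ξ(2(t_i − t_k))) ) · ψ(t + e_i)/f(t + e_i) = Σ_{i=1}^{n} ( ∏_{k ≠ i} (q^{t_i − t_k + 1 + l} − q^{−(t_i − t_k + 1 + l)}) / (q^{t_i − t_k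 + 1} − q^{−(t_i − t_k + 1)}) ) · ψ(t + e_i), where H_l acts by (H_l φ)(t) = Σ_{i=1}^{n} ∏_{k < i} (1 − [l][l+1] ξ(2(t_i − t_k))) · φ(t + e_i). -/
noncomputable def dd (q x : ℝ) : ℝ := q ^ x - q ^ (-x)

lemma gfun_eq (q : ℝ) (l : ℕ) (t : ℝ) : gfun q l t = (∏ m ∈ Finset.Icc 1 l, dd q (t + m))⁻¹ := rfl

lemma rpow_inj {q : ℝ} (hq : 0 < q) (hq1 : q ≠ 1) {a b : ℝ} (h : q ^ a = q ^ b) : a = b := by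
  rw [Real.rpow_def_of_pos hq, Real.rpow_def_of_pos hq, Real.exp_eq_exp] at h
  exact mul_left_cancel₀ (Real.log_ne_zero_of_pos_of_ne_one hq hq1) h

lemma dd_ne {q : ℝ} (hq : 0 < q) (hq1 : q ≠ 1) {x : ℝ} (hx : x ≠ 0) : dd q x ≠ 0 := by
  unfold dd
  rw [sub_ne_zero]
  intro h
  have := rpow_inj hq hq1 h
  apply hx; linarith

lemma dd_neg (q x : ℝ) : dd q (-x) = - dd q x := by unfold dd; rw [neg_neg]; ring

lemma tele (q : ℝ) (l : ℕ) (a b : ℝ) (hb : a + 1 = b) :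
    dd q b * ∏ m ∈ Finset.Icc 1 l, dd q (b + m) =
      dd q (b + l) * ∏ m ∈ Finset.Icc 1 l, dd q (a + m) := by
  subst hb
  induction l with
  | zero => simp
  | succ l ih =>
    rw [Finset.prod_Icc_succ_top (by omega), Finset.prod_Icc_succ_top (by omega)]
    push_cast
    push_cast at ih
    rw [show a + ((l : ℝ) + 1) = a + 1 + l by ring]
    linear_combination dd q (a + 1 + ((l : ℝ) + 1)) * ih

lemma core (q : ℝ) (hq : 0 < q) (hq1 : q ≠ 1) (l : ℕ) (u : ℝ) (hu : u ≠ 0) (hu1 : u + 1 ≠ 0) :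
    (1 - qint q l * qint q (l + 1) * xi q (2 * u)) * (dd q u * dd q (u + 1)) =
      dd q (u + 1 + l) * dd q (u - l) := by
  have hq0 : q ≠ 0 := hq.ne'
  have hA0 : q ^ u ≠ 0 := (Real.rpow_pos_of_pos hq u).ne'
  have hL0 : q ^ (l : ℝ) ≠ 0 := (Real.rpow_pos_of_pos hq _).ne'
  have e1 : q ^ (u + 1) = q ^ u * q := by rw [Real.rpow_add hq, Real.rpow_one]
  have e2 : q ^ (2 * u) = q ^ u * q ^ u := by rw [two_mul, Real.rpow_add hq]
  have e3 : q ^ (2 * u + 1) = q ^ u * q ^ u * q := by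
    rw [show 2 * u + 1 = u + u + 1 by ring, Real.rpow_add hq, Real.rpow_add hq, Real.rpow_one]
  have e4 : q ^ (2 * u + 2) = q ^ u * q ^ u * (q * q) := by
    rw [show 2 * u + 2 = u + u + (1 + 1) by ring, Real.rpow_add hq, Real.rpow_add hq,
      Real.rpow_add hq, Real.rpow_one]
  have e5 : q ^ (u + 1 + (l : ℝ)) = q ^ u * q * q ^ (l : ℝ) := by
    rw [Real.rpow_add hq, Real.rpow_add hq, Real.rpow_one]
  have e6 : q ^ (u - (l : ℝ)) = q ^ u / q ^ (l : ℝ) := Real.rpow_sub hq u l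
  have e7 : q ^ ((l : ℝ) + 1) = q ^ (l : ℝ) * q := by rw [Real.rpow_add hq, Real.rpow_one]
  have h1 : q ^ u * q ^ u - 1 ≠ 0 := by
    rw [sub_ne_zero, ← e2]
    intro h
    have := rpow_inj hq hq1 (h.trans (Real.rpow_zero q).symm)
    apply hu; linarith
  have h2 : q ^ u * q ^ u * (q * q) - 1 ≠ 0 := by
    rw [sub_ne_zero, ← e4]
    intro h
    have := rpow_inj hq hq1 (h.trans (Real.rpow_zero q).symm)
    apply hu1; linarith
  have hqi : q - q⁻¹ ≠ 0 := by
    rw [sub_ne_zero]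
    intro h
    apply hq1
    have h' : q * q = 1 := by
      field_simp at h
      nlinarith [h]
    nlinarith [hq]
  unfold qint xi dd
  push_cast
  rw [Real.rpow_neg hq.le, Real.rpow_neg hq.le, Real.rpow_neg hq.le, Real.rpow_neg hq.le,
    Real.rpow_neg hq.le, Real.rpow_neg hq.le]
  rw [e1, e2, e3, e4, e5, e6, e7]
  generalize hA : q ^ u = A at *
  generalize hL : q ^ (l : ℝ) = L at *
  rw [show q - q⁻¹ = (q*q-1)/q by field_simp; try ring]
  rw [show L - L⁻¹ = (L*L-1)/L by field_simp; try ring]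
  rw [show L*q - (L*q)⁻¹ = (L*L*(q*q)-1)/(L*q) by field_simp; try ring]
  rw [show A - A⁻¹ = (A*A-1)/A by field_simp; try ring]
  rw [show A*q - (A*q)⁻¹ = (A*A*(q*q)-1)/(A*q) by field_simp; try ring]
  rw [show A*q*L - (A*q*L)⁻¹ = (A*A*(q*q)*(L*L)-1)/(A*q*L) by field_simp; try ring]
  rw [show A/L - (A/L)⁻¹ = (A*A-L*L)/(A*L) by rw [inv_div, div_sub_div _ _ hL0 hA0, mul_comm L A]]
  have hq1' : q*q - 1 ≠ 0 := by
    intro h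
    apply hqi
    have hh : q * (q - q⁻¹) = q*q - 1 := by field_simp
    have h2' := hh.trans h
    rcases mul_eq_zero.1 h2' with h3 | h3
    · exact absurd h3 hq0
    · exact h3
  have hq2 : q ^ 2 - 1 ≠ 0 := by rw [sq]; exact hq1'
  have hA2 : A ^ 2 - 1 ≠ 0 := by rw [sq]; exact h1
  have hqA : q ^ 2 * A ^ 2 - 1 ≠ 0 := by rw [sq, sq, mul_comm]; exact h2
  field_simp
  ring

lemma key1 (q : ℝ) (hq : 0 < q) (hq1 : q ≠ 1) (l : ℕ) (s : ℝ) (hs : ∀ z : ℤ, s ≠ (z : ℝ)) :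
    gfun q l s = (q ^ (s + 1 + (l : ℝ)) - q ^ (-(s + 1 + (l : ℝ)))) /
        (q ^ (s + 1) - q ^ (-(s + 1))) * gfun q l (s + 1) := by
  have T := tele q l s (s + 1) rfl
  have hne : ∀ x : ℝ, (∀ z : ℤ, x ≠ (z : ℝ)) → ∀ m : ℕ, dd q (x + m) ≠ 0 := by
    intro x hx m
    apply dd_ne hq hq1
    intro h
    exact hx (-m) (by push_cast; linarith)
  have hs1 : ∀ z : ℤ, s + 1 ≠ (z : ℝ) := by
    intro z h; exact hs (z - 1) (by push_cast; linarith)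
  have hP0 : (∏ m ∈ Finset.Icc 1 l, dd q (s + m)) ≠ 0 :=
    Finset.prod_ne_zero_iff.2 fun m _ => hne s hs m
  have hP1 : (∏ m ∈ Finset.Icc 1 l, dd q (s + 1 + m)) ≠ 0 :=
    Finset.prod_ne_zero_iff.2 fun m _ => hne (s + 1) hs1 m
  have hd1 : dd q (s + 1) ≠ 0 := dd_ne hq hq1 fun h => hs (-1) (by push_cast; linarith)
  have hdl : dd q (s + 1 + l) ≠ 0 := by
    have := hne (s + 1) hs1 l
    exact this
  show (∏ m ∈ Finset.Icc 1 l, dd q (s + m))⁻¹ =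
    dd q (s + 1 + l) / dd q (s + 1) * (∏ m ∈ Finset.Icc 1 l, dd q (s + 1 + m))⁻¹
  field_simp
  linear_combination T

lemma key2 (q : ℝ) (hq : 0 < q) (hq1 : q ≠ 1) (l : ℕ) (u : ℝ) (hu : ∀ z : ℤ, u ≠ (z : ℝ)) :
    gfun q l (-u) * (1 - qint q l * qint q (l + 1) * xi q (2 * u)) =
      (q ^ (u + 1 + (l : ℝ)) - q ^ (-(u + 1 + (l : ℝ)))) /
        (q ^ (u + 1) - q ^ (-(u + 1))) * gfun q l (-u - 1) := by
  have T := tele q l (-u - 1) (-u) (by ring)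
  have C := core q hq hq1 l u (fun h => hu 0 (by push_cast; linarith))
    (fun h => hu (-1) (by push_cast; linarith))
  have hdu : dd q u ≠ 0 := dd_ne hq hq1 fun h => hu 0 (by push_cast; linarith)
  have hd1 : dd q (u + 1) ≠ 0 := dd_ne hq hq1 fun h => hu (-1) (by push_cast; linarith)
  have hdl : dd q (u + 1 + l) ≠ 0 := dd_ne hq hq1 fun h => hu (-1 - l) (by push_cast; linarith)
  have hne : ∀ x : ℝ, (∀ z : ℤ, x ≠ (z : ℝ)) → ∀ m : ℕ, dd q (x + m) ≠ 0 := by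
    intro x hx m
    apply dd_ne hq hq1
    intro h
    exact hx (-m) (by push_cast; linarith)
  have hnu : ∀ z : ℤ, -u ≠ (z : ℝ) := fun z h => hu (-z) (by push_cast; linarith)
  have hnu1 : ∀ z : ℤ, -u - 1 ≠ (z : ℝ) := fun z h => hu (-z - 1) (by push_cast; linarith)
  have hP0 : (∏ m ∈ Finset.Icc 1 l, dd q (-u + m)) ≠ 0 :=
    Finset.prod_ne_zero_iff.2 fun m _ => hne (-u) hnu m
  have hP1 : (∏ m ∈ Finset.Icc 1 l, dd q (-u - 1 + m)) ≠ 0 :=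
    Finset.prod_ne_zero_iff.2 fun m _ => hne (-u - 1) hnu1 m
  -- rewrite T's dd(-u) and dd(-u + l)
  rw [show (-u : ℝ) = -u by rfl] at T
  have T' : dd q u * (∏ m ∈ Finset.Icc 1 l, dd q (-u + m)) =
      dd q (u - l) * (∏ m ∈ Finset.Icc 1 l, dd q (-u - 1 + m)) := by
    have e1 : dd q (-u) = -dd q u := dd_neg q u
    have e2 : dd q (-u + l) = -dd q (u - l) := by
      rw [show -u + (l : ℝ) = -(u - l) by ring, dd_neg]
    rw [e1, e2] at T
    linarith [T]
  have G : (1 - qint q l * qint q (l + 1) * xi q (2 * u)) * dd q (u + 1) *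
      (∏ m ∈ Finset.Icc 1 l, dd q (-u - 1 + m)) =
      dd q (u + 1 + l) * (∏ m ∈ Finset.Icc 1 l, dd q (-u + m)) := by
    apply mul_left_cancel₀ hdu
    linear_combination (∏ m ∈ Finset.Icc 1 l, dd q (-u - 1 + m)) * C -
      dd q (u + 1 + (l : ℝ)) * T'
  show (∏ m ∈ Finset.Icc 1 l, dd q (-u + m))⁻¹ * (1 - qint q l * qint q (l + 1) * xi q (2 * u)) =
    dd q (u + 1 + l) / dd q (u + 1) * (∏ m ∈ Finset.Icc 1 l, dd q (-u - 1 + m))⁻¹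
  field_simp
  rw [mul_comm u 2]
  linear_combination G

noncomputable def ppf (q : ℝ) (l : ℕ) (u : ℝ) : ℝ := 1 - qint q l * qint q (l + 1) * xi q (2 * u)

noncomputable def rrf (q : ℝ) (l : ℕ) (s : ℝ) : ℝ :=
  (q ^ (s + 1 + (l : ℝ)) - q ^ (-(s + 1 + (l : ℝ)))) / (q ^ (s + 1) - q ^ (-(s + 1)))

lemma key1' (q : ℝ) (hq : 0 < q) (hq1 : q ≠ 1) (l : ℕ) (s : ℝ) (hs : ∀ z : ℤ, s ≠ (z : ℝ)) :
    gfun q l s = rrf q l s * gfun q l (s + 1) := key1 q hq hq1 l s hs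

lemma key2' (q : ℝ) (hq : 0 < q) (hq1 : q ≠ 1) (l : ℕ) (u : ℝ) (hu : ∀ z : ℤ, u ≠ (z : ℝ)) :
    gfun q l (-u) * ppf q l u = rrf q l u * gfun q l (-u - 1) := key2 q hq hq1 l u hu

lemma ffun_ne {q : ℝ} (hq : 0 < q) (hq1 : q ≠ 1) (l n : ℕ) (t : Fin n → ℝ)
    (ht : ∀ j k : Fin n, j ≠ k → ∀ z : ℤ, t j - t k ≠ (z : ℝ)) : ffun q l n t ≠ 0 := by
  unfold ffun
  rw [Finset.prod_ne_zero_iff]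
  intro i _
  rw [Finset.prod_ne_zero_iff]
  intro k hk
  rw [Finset.mem_filter] at hk
  rw [gfun_eq]
  apply inv_ne_zero
  rw [Finset.prod_ne_zero_iff]
  intro m _
  apply dd_ne hq hq1
  intro h
  exact ht i k (ne_of_lt hk.2) (-m) (by push_cast; linarith)

lemma perpair (q : ℝ) (hq : 0 < q) (hq1 : q ≠ 1) (l n : ℕ) (t : Fin n → ℝ)
    (ht : ∀ j k : Fin n, j ≠ k → ∀ z : ℤ, t j - t k ≠ (z : ℝ)) (i₀ j k : Fin n) (hjk : j < k) :
    gfun q l (t j - t k) * (if k = i₀ then ppf q l (t i₀ - t j) else 1) =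
      (if j = i₀ then rrf q l (t i₀ - t k) else if k = i₀ then rrf q l (t i₀ - t j) else 1) *
        gfun q l (t j - t k + ((if j = i₀ then (1:ℝ) else 0) - (if k = i₀ then (1:ℝ) else 0))) := by
  by_cases hj : j = i₀
  · subst hj
    simp only [eq_self_iff_true, if_true, if_neg hjk.ne', mul_one]
    rw [show t j - t k + ((1:ℝ) - 0) = t j - t k + 1 by ring]
    exact key1' q hq hq1 l (t j - t k) (ht j k hjk.ne)
  · by_cases hk2 : k = i₀
    · subst hk2
      simp only [eq_self_iff_true, if_true, if_neg hj]
      rw [show t j - t k + ((0:ℝ) - 1) = -(t k - t j) - 1 by ring,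
        show t j - t k = -(t k - t j) by ring]
      exact key2' q hq hq1 l (t k - t j) (ht k j hjk.ne')
    · simp only [if_neg hj, if_neg hk2, mul_one, one_mul]
      norm_num

lemma main_key (q : ℝ) (hq : 0 < q) (hq1 : q ≠ 1) (l n : ℕ) (t : Fin n → ℝ)
    (ht : ∀ j k : Fin n, j ≠ k → ∀ z : ℤ, t j - t k ≠ (z : ℝ)) (i₀ : Fin n) :
    ffun q l n t * (∏ k ∈ Finset.univ.filter (fun k => k < i₀), ppf q l (t i₀ - t k)) =
      (∏ k ∈ Finset.univ.filter (fun k => k ≠ i₀), rrf q l (t i₀ - t k)) *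
        ffun q l n (t + Pi.single i₀ 1) := by
  classical
  have hshift : ∀ j k : Fin n, (t + Pi.single i₀ 1 : Fin n → ℝ) j - (t + Pi.single i₀ 1 : Fin n → ℝ) k =
      t j - t k + ((if j = i₀ then (1:ℝ) else 0) - (if k = i₀ then (1:ℝ) else 0)) := by
    intro j k
    simp only [Pi.add_apply, Pi.single_apply]
    ring
  have hff' : ffun q l n (t + Pi.single i₀ 1) = ∏ j : Fin n,
      ∏ k ∈ Finset.univ.filter (fun k => j < k),
        gfun q l (t j - t k + ((if j = i₀ then (1:ℝ) else 0) - (if k = i₀ then (1:ℝ) else 0))) := by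
    unfold ffun
    exact Finset.prod_congr rfl fun j _ => Finset.prod_congr rfl fun k _ => by rw [hshift]
  have hP : (∏ k ∈ Finset.univ.filter (fun k => k < i₀), ppf q l (t i₀ - t k)) =
      ∏ j : Fin n, ∏ k ∈ Finset.univ.filter (fun k => j < k),
        (if k = i₀ then ppf q l (t i₀ - t j) else 1) := by
    rw [Finset.prod_filter]
    refine Finset.prod_congr rfl fun j _ => ?_
    rw [Finset.prod_ite_eq' (Finset.univ.filter (fun k => j < k)) i₀
      (fun _ => ppf q l (t i₀ - t j))]
    by_cases hcase : j < i₀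
    · rw [if_pos hcase, if_pos (show i₀ ∈ Finset.univ.filter (fun k => j < k) by
        simp [Finset.mem_filter, hcase])]
    · rw [if_neg hcase, if_neg (show i₀ ∉ Finset.univ.filter (fun k => j < k) by
        simp [Finset.mem_filter, hcase])]
  have hsplit : (Finset.univ.filter (fun k : Fin n => k ≠ i₀)) =
      (Finset.univ.filter (fun k => i₀ < k)) ∪ (Finset.univ.filter (fun k => k < i₀)) := by
    ext k
    simp only [Finset.mem_filter, Finset.mem_union, Finset.mem_univ, true_and]
    constructor
    · intro h
      exact (lt_or_gt_of_ne h).symm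
    · rintro (h | h)
      · exact h.ne'
      · exact h.ne
  have hdisj : Disjoint (Finset.univ.filter (fun k : Fin n => i₀ < k))
      (Finset.univ.filter (fun k => k < i₀)) := by
    rw [Finset.disjoint_filter]
    intro k _ h1 h2
    exact absurd (h1.trans h2) (lt_irrefl _)
  have h2 : ∀ j ∈ Finset.univ.erase i₀,
      (∏ k ∈ Finset.univ.filter (fun k => j < k),
        (if j = i₀ then rrf q l (t i₀ - t k) else if k = i₀ then rrf q l (t i₀ - t j) else 1)) =
      (if j < i₀ then rrf q l (t i₀ - t j) else 1) := by
    intro j hj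
    rw [Finset.mem_erase] at hj
    rw [Finset.prod_congr rfl (fun k _ => if_neg hj.1 :
      ∀ k ∈ Finset.univ.filter (fun k => j < k),
        (if j = i₀ then rrf q l (t i₀ - t k) else if k = i₀ then rrf q l (t i₀ - t j) else 1) =
        (if k = i₀ then rrf q l (t i₀ - t j) else 1))]
    rw [Finset.prod_ite_eq' (Finset.univ.filter (fun k => j < k)) i₀
      (fun _ => rrf q l (t i₀ - t j))]
    by_cases hcase : j < i₀
    · rw [if_pos hcase, if_pos (show i₀ ∈ Finset.univ.filter (fun k => j < k) by
        simp [Finset.mem_filter, hcase])]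
    · rw [if_neg hcase, if_neg (show i₀ ∉ Finset.univ.filter (fun k => j < k) by
        simp [Finset.mem_filter, hcase])]
  have hR : (∏ k ∈ Finset.univ.filter (fun k => k ≠ i₀), rrf q l (t i₀ - t k)) =
      ∏ j : Fin n, ∏ k ∈ Finset.univ.filter (fun k => j < k),
        (if j = i₀ then rrf q l (t i₀ - t k) else if k = i₀ then rrf q l (t i₀ - t j) else 1) := by
    rw [hsplit, Finset.prod_union hdisj]
    rw [← Finset.mul_prod_erase Finset.univ _ (Finset.mem_univ i₀)]
    congr 1
    · exact (Finset.prod_congr rfl fun k _ => by rw [if_pos rfl]).symm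
    · rw [Finset.prod_congr rfl h2, Finset.prod_erase _ (by simp), Finset.prod_filter]
  have hcomb : ∀ (F G : Fin n → Fin n → ℝ),
      (∏ j : Fin n, ∏ k ∈ Finset.univ.filter (fun k => j < k), F j k) *
        (∏ j : Fin n, ∏ k ∈ Finset.univ.filter (fun k => j < k), G j k) =
      ∏ j : Fin n, ∏ k ∈ Finset.univ.filter (fun k => j < k), (F j k * G j k) := by
    intro F G
    rw [← Finset.prod_mul_distrib]
    exact Finset.prod_congr rfl fun j _ => (Finset.prod_mul_distrib).symm
  rw [hff', hP, hR]
  rw [show ffun q l n t = ∏ j : Fin n, ∏ k ∈ Finset.univ.filter (fun k => j < k),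
    gfun q l (t j - t k) from rfl]
  rw [hcomb, hcomb]
  refine Finset.prod_congr rfl fun j _ => Finset.prod_congr rfl fun k hk => ?_
  rw [Finset.mem_filter] at hk
  exact perpair q hq hq1 l n t ht i₀ j k hk.2

/-- Lemma 2: the gauge conjugation `f H_l f⁻¹` of the difference Hamiltonian
`(H_l φ)(t) = Σᵢ ∏_{k<i} (1 - [l][l+1] ξ(2(tᵢ-tₖ))) φ(t + eᵢ)` is the
Ruijsenaars–Schneider (Macdonald-type) difference operator:
`f(t) Σᵢ (∏_{k<i} (1 - [l][l+1] ξ(2(tᵢ-tₖ)))) ψ(t+eᵢ)/f(t+eᵢ)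
   = Σᵢ (∏_{k≠i} (q^{tᵢ-tₖ+1+l} - q^{-(tᵢ-tₖ+1+l)})/(q^{tᵢ-tₖ+1} - q^{-(tᵢ-tₖ+1)})) ψ(t+eᵢ)`. -/
theorem gauge_conjugated_Hamiltonian (q : ℝ) (hq : 0 < q) (hq1 : q ≠ 1)
    (l : ℕ) (hl : 0 < l) (n : ℕ) (hn : 2 ≤ n) (t : Fin n → ℝ)
    (ht : ∀ j k : Fin n, j ≠ k → ∀ z : ℤ, t j - t k ≠ (z : ℝ))
    (ψ : (Fin n → ℝ) → ℝ) :
    ffun q l n t *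
        ∑ i : Fin n,
          (∏ k ∈ Finset.univ.filter (fun k => k < i),
            (1 - qint q l * qint q (l + 1) * xi q (2 * (t i - t k)))) *
            ψ (t + Pi.single i 1) / ffun q l n (t + Pi.single i 1) =
      ∑ i : Fin n,
        (∏ k ∈ Finset.univ.filter (fun k => k ≠ i),
          (q ^ (t i - t k + 1 + l) - q ^ (-(t i - t k + 1 + (l : ℝ)))) /
            (q ^ (t i - t k + 1) - q ^ (-(t i - t k + 1)))) *
          ψ (t + Pi.single i 1) := by
  rw [Finset.mul_sum]
  refine Finset.sum_congr rfl fun i _ => ?_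
  have hK := main_key q hq hq1 l n t ht i
  have ht' : ∀ j k : Fin n, j ≠ k → ∀ z : ℤ,
      (t + Pi.single i 1 : Fin n → ℝ) j - (t + Pi.single i 1 : Fin n → ℝ) k ≠ (z : ℝ) := by
    intro j k hjk z h
    simp only [Pi.add_apply, Pi.single_apply] at h
    split_ifs at h with h1 h2 h2
    · exact (hjk (h1.trans h2.symm)).elim
    · exact ht j k hjk (z - 1) (by push_cast; linarith)
    · exact ht j k hjk (z + 1) (by push_cast; linarith)
    · exact ht j k hjk z (by push_cast; linarith)
  have hf' : ffun q l n (t + Pi.single i 1) ≠ 0 := ffun_ne hq hq1 l n _ ht'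
  have step : ffun q l n t *
      ((∏ k ∈ Finset.univ.filter (fun k => k < i), ppf q l (t i - t k)) * ψ (t + Pi.single i 1) /
        ffun q l n (t + Pi.single i 1)) =
      (∏ k ∈ Finset.univ.filter (fun k => k ≠ i), rrf q l (t i - t k)) *
        ψ (t + Pi.single i 1) := by
    rw [show ffun q l n t *
      ((∏ k ∈ Finset.univ.filter (fun k => k < i), ppf q l (t i - t k)) * ψ (t + Pi.single i 1) /
        ffun q l n (t + Pi.single i 1)) =
      (ffun q l n t * (∏ k ∈ Finset.univ.filter (fun k => k < i), ppf q l (t i - t k))) *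
        ψ (t + Pi.single i 1) / ffun q l n (t + Pi.single i 1) from by ring]
    rw [hK]
    rw [mul_right_comm, mul_div_cancel_right₀ _ hf']
  exact step
end
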